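/- arXiv:1004.4188 — 2 statements merged into one kernel-verified Lean document; each statement's English description precedes it below -/
import Mathlib

section
/- Every string of type T that is not Du Val belongs to the smallest collection of strings that contains [4], [3,3], and every string [3,2,…,2,3] (a 3, then k ≥ 0 entries equal to 2, then a 3), and that is closed under the two operations [a_1,…,a_r] ↦ [2, a_1,…,a_{r−1}, a_r+1] and [a_1,…,a_r] ↦ [a_1+1, a_2,…,a_r, 2]. -/
/-- Hirzebruch–Jung continued fraction value of a list:
`hjValue [a₁, …, a_r] = a₁ - 1/(a₂ - 1/(⋯ - 1/a_r))`.
(For the empty list the value is `0`, and since `1/0 = 0` in `ℚ`,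
`hjValue [a] = a`.) -/
def hjValue : List ℤ → ℚ
  | [] => 0
  | a :: l => (a : ℚ) - 1 / hjValue l

/-- A *string* is a nonempty finite sequence of integers, all `≥ 2`. -/
def IsString (l : List ℤ) : Prop := l ≠ [] ∧ ∀ x ∈ l, 2 ≤ x

/-- Two strings are *conjugate* if their values are `m/q` and `m/(m-q)`
for some coprime integers `m > q ≥ 1`. -/
def IsConjugate (a b : List ℤ) : Prop :=
  ∃ m q : ℕ, 1 ≤ q ∧ q < m ∧ Nat.Coprime m q ∧
    hjValue a = (m : ℚ) / q ∧ hjValue b = (m : ℚ) / ((m : ℚ) - q)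

/-- A string is of *type T* if its value, written in lowest terms `n/q` with
coprime `n > q ≥ 1`, satisfies `n ∣ (q+1)²`. -/
def IsTString (l : List ℤ) : Prop :=
  IsString l ∧ ∃ n q : ℕ, 1 ≤ q ∧ q < n ∧ Nat.Coprime n q ∧
    hjValue l = (n : ℚ) / q ∧ n ∣ (q + 1) ^ 2

/-- A string is *Du Val* if all its entries equal `2`. -/
def IsDuVal (l : List ℤ) : Prop := ∀ x ∈ l, x = 2

/-- The smallest collection of lists containing `[4]`, `[3,3]`, and every
`[3,2,…,2,3]`, and closed under the operations
`[a₁,…,a_r] ↦ [2, a₁,…,a_{r-1}, a_r + 1]` and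
`[a₁,…,a_r] ↦ [a₁ + 1, a₂,…,a_r, 2]`. -/
inductive TGen : List ℤ → Prop
  | four : TGen [4]
  | threeThree : TGen [3, 3]
  | chain (k : ℕ) : TGen (3 :: (List.replicate k 2 ++ [3]))
  | left {a : List ℤ} : TGen a → TGen (2 :: (a.dropLast ++ [a.getLastI + 1]))
  | right {a : List ℤ} : TGen a → TGen ((a.headI + 1) :: (a.tail ++ [2]))


/-!
Encode a string `[a₁, …, a_r]` by the product `M` of the matrices `[[aᵢ, -1], [1, 0]]`. It lies
in `SL₂(ℤ)`, its first column `(n, q)` gives the value `n / q` in lowest terms, and reversing the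
string transposes `M` up to signs, so the reversed string has value `n / q'` with
`q q' ≡ 1 (mod n)`. For a non-Du Val string with `n ∣ (q + 1)²` this forces `q' = n - q - 2`, and
since then `n ∣ (n - 2q - 2)²` only three cases remain. If `n = 2q + 2` the string is `[4]` or
`[3,2,…,2,3]`. If `n < 2q` it is `[2, …, b]` with `b ≥ 3`, and deleting the `2` and lowering `b`
by one gives a shorter T-string, of numerator `(q + 1)² / n`. If `n > 2q + 4` the reversed string
is in the previous case, and the generating set is symmetric under reversal.
-/

open Matrix

def hjStep (a : ℤ) : Matrix (Fin 2) (Fin 2) ℤ := !![a, -1; 1, 0]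

def hjMat (l : List ℤ) : Matrix (Fin 2) (Fin 2) ℤ := (l.map hjStep).prod

def hjNum (l : List ℤ) : ℤ := hjMat l 0 0

def hjDen (l : List ℤ) : ℤ := hjMat l 1 0

@[simp] lemma hjMat_nil : hjMat [] = 1 := rfl

lemma hjMat_cons (a : ℤ) (l : List ℤ) : hjMat (a :: l) = hjStep a * hjMat l := by
  simp [hjMat]

lemma hjMat_append (l l' : List ℤ) : hjMat (l ++ l') = hjMat l * hjMat l' := by
  simp [hjMat]

@[simp] lemma hjNum_nil : hjNum [] = 1 := rfl

@[simp] lemma hjDen_nil : hjDen [] = 0 := rfl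

@[simp] lemma hjNum_cons (a : ℤ) (l : List ℤ) : hjNum (a :: l) = a * hjNum l - hjDen l := by
  simp [hjNum, hjDen, hjMat_cons, hjStep, mul_apply, Fin.sum_univ_two, sub_eq_add_neg]

@[simp] lemma hjDen_cons (a : ℤ) (l : List ℤ) : hjDen (a :: l) = hjNum l := by
  simp [hjNum, hjDen, hjMat_cons, hjStep, mul_apply, Fin.sum_univ_two]

lemma det_hjMat (l : List ℤ) : (hjMat l).det = 1 := by
  induction l with
  | nil => simp
  | cons a l ih => rw [hjMat_cons, det_mul, ih, hjStep, det_fin_two_of]; ring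

lemma isCoprime_hjNum_hjDen (l : List ℤ) : IsCoprime (hjNum l) (hjDen l) := by
  have h := det_hjMat l
  rw [det_fin_two] at h
  exact ⟨hjMat l 1 1, -hjMat l 0 1, by rw [hjNum, hjDen]; linear_combination h⟩

lemma hjMat_reverse (l : List ℤ) :
    hjMat l.reverse = !![hjMat l 0 0, -hjMat l 1 0; -hjMat l 0 1, hjMat l 1 1] := by
  induction l with
  | nil => ext i j; fin_cases i <;> fin_cases j <;> rfl
  | cons a l ih =>
    rw [List.reverse_cons, hjMat_append, ih]
    ext i j; fin_cases i <;> fin_cases j <;>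
      simp [hjMat_cons, hjStep, mul_apply, Fin.sum_univ_two] <;> ring

lemma hjNum_reverse (l : List ℤ) : hjNum l.reverse = hjNum l := by
  simp [hjNum, hjMat_reverse]

lemma hjDen_reverse (l : List ℤ) : hjDen l.reverse = -hjMat l 0 1 := by
  simp [hjDen, hjMat_reverse]

-- `hjStep (c + 1) = hjStep c * !![1, 0; -1, 1]`
lemma hjMat_left (m : List ℤ) (c : ℤ) :
    hjMat (2 :: (m ++ [c + 1])) = hjStep 2 * hjMat (m ++ [c]) * !![1, 0; -1, 1] := by
  simp only [hjMat_cons, hjMat_append, mul_assoc]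
  congr 2
  simp [hjMat, hjStep]

section Bounds

variable {l : List ℤ}

lemma hjDen_nonneg_and_lt_hjNum (hl : ∀ x ∈ l, 2 ≤ x) :
    0 ≤ hjDen l ∧ hjDen l < hjNum l := by
  induction l with
  | nil => simp
  | cons a t ih =>
    have ha : 2 ≤ a := hl a (by simp)
    obtain ⟨h0, h1⟩ := ih fun x hx ↦ hl x (List.mem_cons_of_mem a hx)
    simp only [hjNum_cons, hjDen_cons]
    constructor <;> nlinarith

lemma hjNum_pos (hl : ∀ x ∈ l, 2 ≤ x) : 0 < hjNum l := by
  have := hjDen_nonneg_and_lt_hjNum hl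
  omega

lemma one_le_hjDen_and_two_le_hjNum (hl : ∀ x ∈ l, 2 ≤ x) (hne : l ≠ []) :
    1 ≤ hjDen l ∧ 2 ≤ hjNum l := by
  obtain ⟨a, t, rfl⟩ := List.exists_cons_of_ne_nil hne
  have ha : 2 ≤ a := hl a (by simp)
  obtain ⟨h0, h1⟩ := hjDen_nonneg_and_lt_hjNum fun x hx ↦ hl x (List.mem_cons_of_mem a hx)
  simp only [hjNum_cons, hjDen_cons]
  constructor <;> nlinarith

lemma hjNum_cons_bounds {a : ℤ} {t : List ℤ} (hl : ∀ x ∈ a :: t, 2 ≤ x) :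
    (a - 1) * hjDen (a :: t) < hjNum (a :: t) ∧ hjNum (a :: t) ≤ a * hjDen (a :: t) := by
  obtain ⟨h0, h1⟩ := hjDen_nonneg_and_lt_hjNum fun x hx ↦ hl x (List.mem_cons_of_mem a hx)
  simp only [hjNum_cons, hjDen_cons]
  constructor <;> linarith

lemma hjNum_sub_hjDen_cons (a : ℤ) (l : List ℤ) :
    hjNum (a :: l) - hjDen (a :: l) = (a - 2) * hjNum l + (hjNum l - hjDen l) := by
  simp only [hjNum_cons, hjDen_cons]
  ring

lemma isDuVal_of_hjNum_sub_hjDen_eq_one (hl : ∀ x ∈ l, 2 ≤ x) (h : hjNum l - hjDen l = 1) :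
    IsDuVal l := by
  induction l with
  | nil => simp [IsDuVal]
  | cons a t ih =>
    have ha : 2 ≤ a := hl a (by simp)
    have ht : ∀ x ∈ t, 2 ≤ x := fun x hx ↦ hl x (List.mem_cons_of_mem a hx)
    have hpos := hjNum_pos ht
    have hgap := (hjDen_nonneg_and_lt_hjNum ht).2
    rw [hjNum_sub_hjDen_cons] at h
    obtain rfl : a = 2 := by nlinarith
    rw [IsDuVal, List.forall_mem_cons]
    exact ⟨rfl, ih ht (by linarith)⟩

lemma exists_eq_replicate_of_hjNum_sub_hjDen_eq_two (hl : ∀ x ∈ l, 2 ≤ x)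
    (h : hjNum l - hjDen l = 2) : ∃ k, l = List.replicate k 2 ++ [3] := by
  induction l with
  | nil => simp at h
  | cons a t ih =>
    have ha : 2 ≤ a := hl a (by simp)
    have ht : ∀ x ∈ t, 2 ≤ x := fun x hx ↦ hl x (List.mem_cons_of_mem a hx)
    have hgap := (hjDen_nonneg_and_lt_hjNum ht).2
    rw [hjNum_sub_hjDen_cons] at h
    rcases eq_or_ne t [] with rfl | hne
    · exact ⟨0, by simp at h ⊢; linarith⟩
    · have hnum := (one_le_hjDen_and_two_le_hjNum ht hne).2
      obtain rfl : a = 2 := by nlinarith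
      obtain ⟨k, rfl⟩ := ih ht (by linarith)
      exact ⟨k + 1, by simp [List.replicate_succ]⟩

lemma hjValue_eq_div (hl : ∀ x ∈ l, 2 ≤ x) : hjValue l = hjNum l / hjDen l := by
  induction l with
  | nil => simp [hjValue]
  | cons a t ih =>
    have ht : ∀ x ∈ t, 2 ≤ x := fun x hx ↦ hl x (List.mem_cons_of_mem a hx)
    have hpos : (hjNum t : ℚ) ≠ 0 := by exact_mod_cast (hjNum_pos ht).ne'
    rw [hjValue, ih ht, one_div_div, hjNum_cons, hjDen_cons]
    field_simp
    push_cast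
    ring

end Bounds

lemma List.headI_reverse {α : Type*} [Inhabited α] (l : List α) :
    l.reverse.headI = l.getLastI := by
  rcases l.eq_nil_or_concat with rfl | ⟨L, b, rfl⟩ <;> simp [List.getLastI_eq_getLast?_getD]

lemma List.getLastI_reverse {α : Type*} [Inhabited α] (l : List α) :
    l.reverse.getLastI = l.headI := by
  simpa using (List.headI_reverse l.reverse).symm

theorem TGen.reverse {l : List ℤ} (h : TGen l) : TGen l.reverse := by
  induction h with
  | four => exact TGen.four
  | threeThree => exact TGen.threeThree
  | chain k => simpa [List.reverse_replicate] using TGen.chain k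
  | left _ ih => simpa [List.tail_reverse, List.headI_reverse] using ih.right
  | right _ ih => simpa [List.dropLast_reverse, List.getLastI_reverse] using ih.left

lemma lt_or_eq_or_gt_of_dvd_sq {n q : ℤ} (hq : 0 ≤ q) (hqn : q + 2 ≤ n)
    (h : n ∣ (q + 1) ^ 2) :
    n < 2 * q ∨ n = 2 * q + 2 ∨ 2 * q + 4 < n := by
  by_contra! hmid
  have hd : n ∣ (n - 2 * q - 2) ^ 2 := by
    rw [show (n - 2 * q - 2) ^ 2 = (q + 1) ^ 2 * 4 + n * (n - 4 * q - 4) by ring]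
    exact dvd_add (dvd_mul_of_dvd_left h 4) (dvd_mul_right n _)
  have hd0 : n - 2 * q - 2 ≠ 0 := by omega
  have hn4 : n ≤ 4 := by
    have := Int.le_of_dvd (by positivity) hd
    nlinarith
  have hn2 : 2 ≤ n := by omega
  have hq2 : q ≤ 2 := by omega
  interval_cases n <;> interval_cases q <;> omega

section TString

variable {l : List ℤ}

lemma hjDen_reverse_of_dvd (hl : ∀ x ∈ l, 2 ≤ x) (hT : hjNum l ∣ (hjDen l + 1) ^ 2)
    (hq : hjDen l + 2 ≤ hjNum l) : hjDen l.reverse = hjNum l - hjDen l - 2 := by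
  have hne : l ≠ [] := by rintro rfl; simp at hq
  have hrev : ∀ x ∈ l.reverse, 2 ≤ x := fun x hx ↦ hl x (List.mem_reverse.mp hx)
  have hq'1 := (one_le_hjDen_and_two_le_hjNum hrev (List.reverse_ne_nil_iff.mpr hne)).1
  have hq'n := (hjDen_nonneg_and_lt_hjNum hrev).2
  have hq0 := (hjDen_nonneg_and_lt_hjNum hl).1
  rw [hjNum_reverse] at hq'n
  have hdet : hjNum l * hjMat l 1 1 + hjDen l.reverse * hjDen l = 1 := by
    have := det_hjMat l
    rw [det_fin_two] at this
    rw [hjDen_reverse, hjNum, hjDen]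
    linear_combination this
  have hdvd : hjNum l ∣ hjDen l.reverse + hjDen l + 2 := by
    refine (isCoprime_hjNum_hjDen l).dvd_of_dvd_mul_left ?_
    rw [show hjDen l * (hjDen l.reverse + hjDen l + 2) =
      (hjDen l + 1) ^ 2 - hjNum l * hjMat l 1 1 by linear_combination hdet]
    exact dvd_sub hT (dvd_mul_right _ _)
  obtain ⟨c, hc⟩ := hdvd
  obtain rfl : c = 1 := by
    have : 0 < c := by nlinarith
    have : c < 2 := by nlinarith
    omega
  linarith

lemma dvd_and_le_reverse (hl : ∀ x ∈ l, 2 ≤ x) (hT : hjNum l ∣ (hjDen l + 1) ^ 2)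
    (hq : hjDen l + 2 ≤ hjNum l) :
    hjNum l.reverse ∣ (hjDen l.reverse + 1) ^ 2 ∧ hjDen l.reverse + 2 ≤ hjNum l.reverse := by
  have hq0 := (hjDen_nonneg_and_lt_hjNum hl).1
  rw [hjNum_reverse, hjDen_reverse_of_dvd hl hT hq]
  refine ⟨?_, by linarith⟩
  rw [show (hjNum l - hjDen l - 2 + 1) ^ 2 =
    (hjDen l + 1) ^ 2 + hjNum l * (hjNum l - 2 * hjDen l - 2) by ring]
  exact dvd_add hT (dvd_mul_right _ _)

lemma hjNum_hjDen_of_left {m : List ℤ} {c : ℤ} (hlm : l = 2 :: (m ++ [c + 1]))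
    (hq' : hjDen l.reverse = hjNum l - hjDen l - 2) :
    hjNum l * hjNum (m ++ [c]) = (hjDen l + 1) ^ 2 ∧
      hjDen (m ++ [c]) = 2 * hjNum (m ++ [c]) - hjDen l - 2 := by
  have hdet := det_hjMat (m ++ [c])
  rw [det_fin_two] at hdet
  rw [hjDen_reverse] at hq'
  subst hlm
  simp only [hjNum, hjDen, hjMat_left, hjStep, mul_apply, Fin.sum_univ_two] at hq' ⊢
  simp at hq' ⊢
  set X := hjMat (m ++ [c])
  exact ⟨by linear_combination hdet + (X 0 1 - X 0 0) * hq', by linear_combination hq'⟩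

lemma exists_eq_left_of_lt (hl : ∀ x ∈ l, 2 ≤ x) (hT : hjNum l ∣ (hjDen l + 1) ^ 2)
    (hq : hjDen l + 2 ≤ hjNum l) (hlt : hjNum l < 2 * hjDen l) :
    ∃ l', l'.length < l.length ∧ (∀ x ∈ l', 2 ≤ x) ∧ hjNum l' ∣ (hjDen l' + 1) ^ 2 ∧
      hjDen l' + 2 ≤ hjNum l' ∧ l = 2 :: (l'.dropLast ++ [l'.getLastI + 1]) := by
  have hq' := hjDen_reverse_of_dvd hl hT hq
  obtain ⟨a, t, rfl⟩ := List.exists_cons_of_ne_nil (show l ≠ [] by rintro rfl; simp at hq)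
  obtain rfl : a = 2 := by
    have := (hjNum_cons_bounds hl).1
    have := hl a (by simp)
    nlinarith
  obtain ⟨m, b, rfl⟩ : ∃ m b, t = m ++ [b] := by
    rcases t.eq_nil_or_concat with rfl | ⟨m, b, rfl⟩
    · simp at hlt
    · exact ⟨m, b, by simp⟩
  -- `b` heads the reversed string, whose value `n / (n - q - 2)` exceeds `2`.
  have hb : 3 ≤ b := by
    have hrev : (2 :: (m ++ [b])).reverse = b :: (m.reverse ++ [2]) := by simp
    have := (hjNum_cons_bounds (a := b) (t := m.reverse ++ [2])
      (by rw [← hrev]; exact fun x hx ↦ hl x (List.mem_reverse.mp hx))).2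
    rw [← hrev, hjNum_reverse, hq'] at this
    nlinarith
  obtain ⟨hnum, hden⟩ := hjNum_hjDen_of_left (c := b - 1) (by rw [sub_add_cancel]) hq'
  refine ⟨m ++ [b - 1], by simp, fun x hx ↦ ?_, ?_, by nlinarith,
    by simp [List.getLastI_eq_getLast?_getD]⟩
  · rcases List.mem_append.mp hx with hx | hx
    · exact hl x (by simp [hx])
    · simp at hx
      omega
  · rw [hden]
    exact Dvd.intro (4 * hjNum (m ++ [b - 1]) - 4 * hjDen (2 :: (m ++ [b])) - 4 +
      hjNum (2 :: (m ++ [b]))) (by linear_combination hnum)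

lemma tGen_of_hjNum_eq_two_mul_add_two (hl : ∀ x ∈ l, 2 ≤ x) (h : hjNum l = 2 * hjDen l + 2) :
    TGen l := by
  obtain ⟨a, t, rfl⟩ := List.exists_cons_of_ne_nil (show l ≠ [] by rintro rfl; simp at h)
  have ht : ∀ x ∈ t, 2 ≤ x := fun x hx ↦ hl x (List.mem_cons_of_mem a hx)
  simp only [hjNum_cons, hjDen_cons] at h
  rcases eq_or_ne t [] with rfl | hne
  · obtain rfl : a = 4 := by simpa using h
    exact TGen.four
  · obtain ⟨hd1, hn2⟩ := one_le_hjDen_and_two_le_hjNum ht hne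
    have hlt := (hjDen_nonneg_and_lt_hjNum ht).2
    obtain rfl : a = 3 := by
      have : 3 ≤ a := by nlinarith
      have : a ≤ 3 := by nlinarith
      omega
    obtain ⟨k, rfl⟩ := exists_eq_replicate_of_hjNum_sub_hjDen_eq_two ht (by linarith)
    exact TGen.chain k

end TString

theorem tGen_of_dvd {l : List ℤ} (hl : ∀ x ∈ l, 2 ≤ x) (hT : hjNum l ∣ (hjDen l + 1) ^ 2)
    (hq : hjDen l + 2 ≤ hjNum l) : TGen l := by
  have of_lt : ∀ l' : List ℤ, l'.length = l.length → (∀ x ∈ l', 2 ≤ x) →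
      hjNum l' ∣ (hjDen l' + 1) ^ 2 → hjDen l' + 2 ≤ hjNum l' → hjNum l' < 2 * hjDen l' →
      TGen l' := by
    intro l' hlen hl' hT' hq' hlt
    obtain ⟨p, hp, hlp, hTp, hqp, rfl⟩ := exists_eq_left_of_lt hl' hT' hq' hlt
    exact (tGen_of_dvd hlp hTp hqp).left
  rcases lt_or_eq_or_gt_of_dvd_sq (hjDen_nonneg_and_lt_hjNum hl).1 hq hT with h | h | h
  · exact of_lt l rfl hl hT hq h
  · exact tGen_of_hjNum_eq_two_mul_add_two hl h
  · obtain ⟨hTr, hqr⟩ := dvd_and_le_reverse hl hT hq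
    have hltr : hjNum l.reverse < 2 * hjDen l.reverse := by
      rw [hjNum_reverse, hjDen_reverse_of_dvd hl hT hq]
      linarith
    simpa using (of_lt l.reverse l.length_reverse
      (fun x hx ↦ hl x (List.mem_reverse.mp hx)) hTr hqr hltr).reverse
termination_by l.length

/-- Every non-Du Val string of type T is obtained from `[4]`, `[3,3]` or
`[3,2,…,2,3]` by iterating the two extension operations. -/
theorem tString_mem_tGen (a : List ℤ) (h : IsTString a) (hnd : ¬ IsDuVal a) :
    TGen a := by
  obtain ⟨⟨hne, hl⟩, n, q, hq, -, hcop, hval, hdvd⟩ := h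
  have hd := (one_le_hjDen_and_two_le_hjNum hl hne).1
  have hdn := (hjDen_nonneg_and_lt_hjNum hl).2
  obtain ⟨hN, hD⟩ : hjNum a = n ∧ hjDen a = q :=
    Rat.div_int_inj (by omega) (by omega)
      (Int.isCoprime_iff_gcd_eq_one.mp (isCoprime_hjNum_hjDen a)) (by simpa using hcop)
      (by rw [← hjValue_eq_div hl, hval]; push_cast; rfl)
  refine tGen_of_dvd hl (by rw [hN, hD]; exact_mod_cast hdvd) ?_
  have := mt (isDuVal_of_hjNum_sub_hjDen_eq_one hl) hnd
  omega
end

section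
/- Let p : D → X be a continuous map between locally compact Hausdorff topological spaces, and let ℓ ⊆ X be a compact subset such that p⁻¹(ℓ) is compact. Then there exist an open subset W of D containing p⁻¹(ℓ) and an open subset V of X containing p(W) such that the restriction of p to W, viewed as a map W → V, is proper. -/
/-- Let `p : D → X` be a continuous map between locally compact Hausdorff
spaces and `ℓ ⊆ X` a compact subset with `p ⁻¹' ℓ` compact. Then there are
an open `W ⊆ D` containing `p ⁻¹' ℓ` and an open `V ⊆ X` containing `p '' W`
such that the restriction `p : W → V` is a proper map. -/
theorem exists_open_nhds_restrict_properMap {D X : Type*}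
    [TopologicalSpace D] [TopologicalSpace X]
    [LocallyCompactSpace D] [T2Space D] [LocallyCompactSpace X] [T2Space X]
    (p : D → X) (hp : Continuous p) (ℓ : Set X) (hℓ : IsCompact ℓ)
    (hpre : IsCompact (p ⁻¹' ℓ)) :
    ∃ (W : Set D) (V : Set X) (hWV : Set.MapsTo p W V),
      IsOpen W ∧ p ⁻¹' ℓ ⊆ W ∧ IsOpen V ∧ IsProperMap hWV.restrict := by
  obtain ⟨K, hK, hsub⟩ := exists_compact_superset hpre
  set U := interior K with hUdef
  have hUopen : IsOpen U := isOpen_interior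
  have hclU : IsCompact (closure U) :=
    hK.of_isClosed_subset isClosed_closure (closure_minimal interior_subset hK.isClosed)
  have hCcomp : IsCompact (p '' (closure U \ U)) :=
    (hclU.diff hUopen).image hp
  set V := (p '' (closure U \ U))ᶜ with hVdef
  have hVopen : IsOpen V := hCcomp.isClosed.isOpen_compl
  set W := U ∩ p ⁻¹' V with hWdef
  have hWopen : IsOpen W := hUopen.inter (hVopen.preimage hp)
  -- key: closure U ∩ p ⁻¹' V ⊆ W
  have hkey : closure U ∩ p ⁻¹' V ⊆ W := by
    rintro x ⟨hx, hxV⟩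
    refine ⟨?_, hxV⟩
    by_contra hxU
    exact hxV ⟨x, ⟨hx, hxU⟩, rfl⟩
  have hℓW : p ⁻¹' ℓ ⊆ W := by
    intro x hx
    refine ⟨hsub hx, ?_⟩
    rintro ⟨y, ⟨hy, hyU⟩, hpy⟩
    refine hyU (hsub ?_)
    show p y ∈ ℓ
    rw [hpy]; exact hx
  have hWV : Set.MapsTo p W V := fun x hx => hx.2
  refine ⟨W, V, hWV, hWopen, hℓW, hVopen, ?_⟩
  haveI : LocallyCompactSpace V := hVopen.locallyCompactSpace
  rw [isProperMap_iff_isCompact_preimage]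
  constructor
  · exact hp.restrict _
  · intro L hL
    rw [Subtype.isCompact_iff]
    have hL' : IsCompact (Subtype.val '' L) := hL.image continuous_subtype_val
    have himg : Subtype.val '' (hWV.restrict ⁻¹' L) = closure U ∩ p ⁻¹' (Subtype.val '' L) := by
      ext x
      constructor
      · rintro ⟨⟨y, hy⟩, hyL, rfl⟩
        exact ⟨subset_closure hy.1, ⟨_, hyL, rfl⟩⟩
      · rintro ⟨hxcl, z, hzL, hzx⟩
        have hxV : p x ∈ V := hzx ▸ z.2
        have hxW : x ∈ W := hkey ⟨hxcl, hxV⟩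
        refine ⟨⟨x, hxW⟩, ?_, rfl⟩
        show (⟨p x, hxV⟩ : V) ∈ L
        have : z = ⟨p x, hxV⟩ := Subtype.ext hzx
        exact this ▸ hzL
    exact himg ▸ hclU.inter_right (hL'.isClosed.preimage hp)
end
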